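/- In the Gaussian case with δ-pinning, the distribution ν_Λ^{ε} of pinned sites satisfies the lattice (or strong FKG) condition: ν_Λ^{ε}(A ∪ B) · ν_Λ^{ε}(A ∩ B) ≥ ν_Λ^{ε}(A) · ν_Λ^{ε}(B) for all A, B ⊆ Λ. -/

import Mathlib

open MeasureTheory Real

/-- Extension of a configuration on a finite set `D` by zero boundary conditions. -/
noncomputable def extendBy {d : ℕ} (D : Finset (Fin d → ℤ))
    (φ : {x // x ∈ D} → ℝ) : (Fin d → ℤ) → ℝ :=
  fun x => if h : x ∈ D then φ ⟨x, h⟩ else 0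

/-- The Gaussian Hamiltonian `(β/2) ∑_{x,y} p(x-y) (ψ_x - ψ_y)²/2` in the volume `D`. -/
noncomputable def gaussH {d : ℕ} (p : (Fin d → ℤ) → ℝ) (β : ℝ)
    (D : Finset (Fin d → ℤ)) (ψ : (Fin d → ℤ) → ℝ) : ℝ :=
  (β / 2) * ∑' q : (Fin d → ℤ) × (Fin d → ℤ),
    if q.1 ∈ D ∨ q.2 ∈ D then p (q.1 - q.2) * ((ψ q.1 - ψ q.2) ^ 2 / 2) else 0

/-- Partition function of the free Gaussian field on `D` with `0`-boundary conditions. -/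
noncomputable def freeZ {d : ℕ} (p : (Fin d → ℤ) → ℝ) (β : ℝ)
    (D : Finset (Fin d → ℤ)) : ℝ :=
  ∫ φ : {x // x ∈ D} → ℝ, Real.exp (-(gaussH p β D (extendBy D φ)))

/-- Expectation of `f` under the free Gaussian field on `D` with `0`-boundary conditions. -/
noncomputable def freeAvg {d : ℕ} (p : (Fin d → ℤ) → ℝ) (β : ℝ)
    (D : Finset (Fin d → ℤ)) (f : ((Fin d → ℤ) → ℝ) → ℝ) : ℝ :=
  (freeZ p β D)⁻¹ *
    ∫ φ : {x // x ∈ D} → ℝ,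
      f (extendBy D φ) * Real.exp (-(gaussH p β D (extendBy D φ)))

/-- The single-site measure `dφ + ε δ₀(dφ)` of δ-pinning. -/
noncomputable def pinMeasure (ε : ℝ) : Measure ℝ :=
  volume + ENNReal.ofReal ε • Measure.dirac 0

instance pinMeasure.instSigmaFinite (ε : ℝ) : SigmaFinite (pinMeasure ε) := by
  have : IsFiniteMeasure (ENNReal.ofReal ε • (Measure.dirac (0 : ℝ))) := by
    constructor
    simp [ENNReal.ofReal_lt_top]
  unfold pinMeasure
  infer_instance

/-- Partition function of the Gaussian δ-pinning measure on `Λ`. -/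
noncomputable def pinZ {d : ℕ} (p : (Fin d → ℤ) → ℝ) (β : ℝ)
    (Λ : Finset (Fin d → ℤ)) (ε : ℝ) : ℝ :=
  ∫ φ : {x // x ∈ Λ} → ℝ, Real.exp (-(gaussH p β Λ (extendBy Λ φ)))
    ∂(Measure.pi fun _ => pinMeasure ε)

/-- Expectation of `f` under the Gaussian δ-pinning measure `μ_Λ^ε`. -/
noncomputable def pinAvg {d : ℕ} (p : (Fin d → ℤ) → ℝ) (β : ℝ)
    (Λ : Finset (Fin d → ℤ)) (ε : ℝ) (f : ((Fin d → ℤ) → ℝ) → ℝ) : ℝ :=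
  (pinZ p β Λ ε)⁻¹ *
    ∫ φ : {x // x ∈ Λ} → ℝ,
      f (extendBy Λ φ) * Real.exp (-(gaussH p β Λ (extendBy Λ φ)))
      ∂(Measure.pi fun _ => pinMeasure ε)

/-- The distribution of pinned sites `ν_Λ^ε(A) = ε^{|A|} Z_{Λ\A} / Z_Λ^ε`. -/
noncomputable def nuPin {d : ℕ} (p : (Fin d → ℤ) → ℝ) (β : ℝ)
    (Λ : Finset (Fin d → ℤ)) (ε : ℝ) (A : Finset (Fin d → ℤ)) : ℝ :=
  ε ^ A.card * freeZ p β (Λ \ A) / pinZ p β Λ ε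

/-!
For `ψ` vanishing off a finite set `D`, the Hamiltonian `gaussH p β D ψ` is `ψᵀ M ψ` for the matrix
`M = (β/2)(I - P)`, `P x y = p (x - y)`, so `freeZ p β D` is the Gaussian integral `Z(D)` of the
principal submatrix `M_D`. The powers of `ε` cancel since `|A| + |B| = |A ∪ B| + |A ∩ B|`, and the
lattice condition becomes `Z(C) Z(D) ≤ Z(C ∩ D) Z(C ∪ D)`: Koteljanskii's inequality, since
`Z(D) = π^{|D|/2} det(M_D)^{-1/2}`.

If `p` charges some `v ≠ 0`, then `M` is positive definite: a finitely supported configuration of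
zero Dirichlet energy is `v`-periodic, hence zero. Integrating out one more site `z` by completing
the square gives `Z(S ∪ {z}) = Z(S) √(π / κ_S(z))`, where the Schur complement `κ_S(z)` is the least
energy of a configuration on `S ∪ {z}` equal to `1` at `z`. A larger `S` allows more competitors, so
`κ_S(z)` decreases in `S`; this gives `Z(S ∪ {z}) Z(T) ≤ Z(S) Z(T ∪ {z})` for `S ⊆ T ∌ z`, and the
general inequality follows by induction. If `p` is concentrated at `0`, then `M = 0` and `Z(D) = 0`
unless `D = ∅`.
-/

open Finset Function

lemma Function.support_updateFinset_zero_subset {α M : Type*} [DecidableEq α] [Zero M]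
    (S : Finset α) (φ : S → M) : support (updateFinset (0 : α → M) S φ) ⊆ S :=
  support_subset_iff'.2 fun i hi => by simp [updateFinset, show i ∉ S from hi]

lemma continuous_updateFinset {α β : Type*} [DecidableEq α] [TopologicalSpace β]
    (x : α → β) (S : Finset α) : Continuous (updateFinset x S) :=
  continuous_pi fun i => by
    by_cases h : i ∈ S <;> simp [updateFinset, h, continuous_apply, continuous_const]

theorem Finset.mul_le_inter_mul_union_of_insert {α : Type*} [DecidableEq α]
    {F : Finset α → ℝ} (hpos : ∀ S, 0 < F S)
    (hstep : ∀ S T z, S ⊆ T → z ∉ T → F (insert z S) * F T ≤ F S * F (insert z T))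
    (C D : Finset α) : F C * F D ≤ F (C ∩ D) * F (C ∪ D) := by
  -- the points of `D \ C` are added one at a time, to `D ∩ C` and to `C` alike
  have key {I : Finset α} (hI : I ⊆ C) (U : Finset α) (hU : Disjoint U C) :
      F C * F (U ∪ I) ≤ F I * F (U ∪ C) := by
    induction U using Finset.induction_on with
    | empty => simp [mul_comm]
    | insert z U hz ih =>
      have hzC : z ∉ C := disjoint_left.1 hU (mem_insert_self z U)
      have hU' := ih (disjoint_of_subset_left (subset_insert z U) hU)
      have hzstep := hstep (U ∪ I) (U ∪ C) z (union_subset_union_right hI) (by simp [hz, hzC])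
      rw [insert_union, insert_union]
      refine le_of_mul_le_mul_right ?_ (mul_pos (hpos (U ∪ I)) (hpos (U ∪ C)))
      calc F C * F (insert z (U ∪ I)) * (F (U ∪ I) * F (U ∪ C))
          = F C * F (U ∪ I) * (F (insert z (U ∪ I)) * F (U ∪ C)) := by ring
        _ ≤ F I * F (U ∪ C) * (F (U ∪ I) * F (insert z (U ∪ C))) :=
          mul_le_mul hU' hzstep (mul_pos (hpos _) (hpos _)).le (mul_pos (hpos _) (hpos _)).le
        _ = F I * F (insert z (U ∪ C)) * (F (U ∪ I) * F (U ∪ C)) := by ring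
  have h := key (I := D ∩ C) inter_subset_right (D \ C) disjoint_sdiff_self_left
  rwa [sdiff_union_inter, sdiff_union_self_eq_union, inter_comm, union_comm] at h

namespace Matrix

variable {α : Type*} {M : Matrix α α ℝ} {S T : Finset α} {z : α}

def quadOn (M : Matrix α α ℝ) (S : Finset α) (f : α → ℝ) : ℝ :=
  ∑ i ∈ S, ∑ j ∈ S, f i * M i j * f j

lemma quadOn_congr {f g : α → ℝ} (h : ∀ i ∈ S, f i = g i) : quadOn M S f = quadOn M S g :=
  sum_congr rfl fun i hi => sum_congr rfl fun j hj => by rw [h i hi, h j hj]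

lemma quadOn_smul (c : ℝ) (M : Matrix α α ℝ) (S : Finset α) (f : α → ℝ) :
    quadOn (c • M) S f = c * quadOn M S f := by
  simp only [quadOn, smul_apply, smul_eq_mul, mul_sum]
  exact sum_congr rfl fun _ _ => sum_congr rfl fun _ _ => by ring

lemma quadOn_of_subset (hST : S ⊆ T) {f : α → ℝ} (hf : support f ⊆ S) :
    quadOn M S f = quadOn M T f := by
  have hf' : ∀ i ∉ S, f i = 0 := support_subset_iff'.1 hf
  have inner (i : α) : ∑ j ∈ S, f i * M i j * f j = ∑ j ∈ T, f i * M i j * f j :=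
    sum_subset hST fun j _ hj => by simp [hf' j hj]
  simp_rw [quadOn, inner]
  exact sum_subset hST fun i _ hi => by simp [hf' i hi]

lemma quadOn_add_smul (hM : M.IsSymm) (f m : α → ℝ) (t : ℝ) :
    quadOn M S (f + t • m) =
      quadOn M S f + 2 * t * ∑ i ∈ S, ∑ j ∈ S, f i * M i j * m j + t ^ 2 * quadOn M S m := by
  have cross : ∑ i ∈ S, ∑ j ∈ S, m i * M i j * f j = ∑ i ∈ S, ∑ j ∈ S, f i * M i j * m j := by
    rw [sum_comm]
    refine sum_congr rfl fun i _ => sum_congr rfl fun j _ => ?_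
    rw [← hM.apply i j]
    ring
  calc quadOn M S (f + t • m)
      = quadOn M S f + t * ∑ i ∈ S, ∑ j ∈ S, f i * M i j * m j
          + t * ∑ i ∈ S, ∑ j ∈ S, m i * M i j * f j + t ^ 2 * quadOn M S m := by
        simp only [quadOn, mul_sum, ← sum_add_distrib, Pi.add_apply, Pi.smul_apply, smul_eq_mul]
        exact sum_congr rfl fun i _ => sum_congr rfl fun j _ => by ring
    _ = _ := by rw [cross]; ring

lemma quadOn_eq_onFinset_sum {f : α → ℝ} (hf : support f ⊆ S) :
    quadOn M S f = (Finsupp.onFinset S f fun _ hi => hf hi).sum fun i xi =>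
      (Finsupp.onFinset S f fun _ hi => hf hi).sum fun j xj => star xi * M i j * xj := by
  simp [quadOn]

lemma finsupp_sum_eq_quadOn (f : α →₀ ℝ) :
    (f.sum fun i xi => f.sum fun j xj => star xi * M i j * xj) = quadOn M f.support f := by
  simp [Finsupp.sum, quadOn]

lemma PosSemidef.quadOn_nonneg (hM : M.PosSemidef) (S : Finset α) (f : α → ℝ) :
    0 ≤ quadOn M S f := by
  classical
  rw [quadOn_congr fun i hi => (Set.indicator_of_mem (mem_coe.2 hi) f).symm,
    quadOn_eq_onFinset_sum Set.support_indicator_subset]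
  exact hM.2 _

lemma PosDef.quadOn_pos (hM : M.PosDef) {f : α → ℝ} (hf : support f ⊆ S) (hf0 : f ≠ 0) :
    0 < quadOn M S f :=
  quadOn_eq_onFinset_sum hf ▸ hM.2 fun h => hf0 (by simpa using congr_arg (⇑) h)

lemma PosDef.exists_sum_mul_eq (hM : M.PosDef) (S : Finset α) (b : α → ℝ) :
    ∃ m : α → ℝ, support m ⊆ S ∧ ∀ i ∈ S, ∑ j ∈ S, M i j * m j = b i := by
  classical
  obtain ⟨m, hm⟩ := mulVec_surjective_iff_isUnit.2
    (hM.submatrix Subtype.val_injective (m := S)).isUnit fun i => b i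
  refine ⟨updateFinset 0 S m, support_updateFinset_zero_subset S m, fun i hi => ?_⟩
  rw [← sum_coe_sort, ← congr_fun hm ⟨i, hi⟩]
  simp [mulVec, dotProduct, updateFinset]

variable [DecidableEq α]

lemma quadOn_insert_update (hM : M.IsSymm) (hz : z ∉ S) (f : α → ℝ) (t : ℝ) :
    quadOn M (insert z S) (update f z t) =
      quadOn M S f + 2 * t * ∑ i ∈ S, f i * M i z + M z z * t ^ 2 := by
  have hS : ∀ i ∈ S, update f z t i = f i :=
    fun i hi => update_of_ne (ne_of_mem_of_not_mem hi hz) _ _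
  simp +contextual only [quadOn, sum_insert hz, update_self, hS, ← hM.apply z]
  simp only [mul_sum, ← sum_add_distrib]
  rw [add_assoc, ← sum_add_distrib, add_comm]
  congr 1
  · exact sum_congr rfl fun x _ => by ring
  · ring

-- The Schur complement `M z z - M_{zS} M_S⁻¹ M_{Sz}` of `M_S` in `M_{S ∪ {z}}`, variationally.
noncomputable def schurCompl (M : Matrix α α ℝ) (S : Finset α) (z : α) : ℝ :=
  sInf (Set.range fun f => quadOn M (insert z S) (update f z 1))

lemma quadOn_insert_update_neg {m : α → ℝ} {κ : ℝ}
    (h : ∀ f t, quadOn M (insert z S) (update f z t) = quadOn M S (f + t • m) + κ * t ^ 2) :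
    quadOn M (insert z S) (update (-m) z 1) = κ := by
  rw [h]
  simp [quadOn]

lemma PosSemidef.isLeast_of_quadOn_insert_update_eq (hM : M.PosSemidef) {m : α → ℝ} {κ : ℝ}
    (h : ∀ f t, quadOn M (insert z S) (update f z t) = quadOn M S (f + t • m) + κ * t ^ 2) :
    IsLeast (Set.range fun f => quadOn M (insert z S) (update f z 1)) κ := by
  refine ⟨⟨-m, quadOn_insert_update_neg h⟩, ?_⟩
  rintro _ ⟨f, rfl⟩
  simpa [h] using hM.quadOn_nonneg S (f + m)

lemma PosDef.exists_quadOn_insert_update_eq (hM : M.PosDef) (hz : z ∉ S) :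
    ∃ m : α → ℝ, support m ⊆ S ∧ ∀ f t, quadOn M (insert z S) (update f z t) =
      quadOn M S (f + t • m) + schurCompl M S z * t ^ 2 := by
  have hsymm : M.IsSymm := isHermitian_iff_isSymm.1 hM.1
  obtain ⟨m, hm, hmb⟩ := hM.exists_sum_mul_eq S fun i => M i z
  have h (f : α → ℝ) (t : ℝ) : quadOn M (insert z S) (update f z t) =
      quadOn M S (f + t • m) + (M z z - quadOn M S m) * t ^ 2 := by
    have hcross : ∑ i ∈ S, ∑ j ∈ S, f i * M i j * m j = ∑ i ∈ S, f i * M i z :=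
      sum_congr rfl fun i hi => by simp_rw [mul_assoc, ← mul_sum, hmb i hi]
    rw [quadOn_insert_update hsymm hz, quadOn_add_smul hsymm, hcross]
    ring
  rw [schurCompl, (hM.posSemidef.isLeast_of_quadOn_insert_update_eq h).csInf_eq]
  exact ⟨m, hm, h⟩

lemma support_update_neg_subset {m : α → ℝ} (hm : support m ⊆ S) :
    support (update (-m) z 1) ⊆ ↑(insert z S) := by
  rw [support_update_of_ne_zero _ _ (one_ne_zero (α := ℝ)), support_neg, coe_insert]
  exact Set.insert_subset_insert hm

lemma PosDef.schurCompl_pos (hM : M.PosDef) (hz : z ∉ S) : 0 < schurCompl M S z := by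
  obtain ⟨m, hm, h⟩ := hM.exists_quadOn_insert_update_eq hz
  rw [← quadOn_insert_update_neg h]
  exact hM.quadOn_pos (support_update_neg_subset hm)
    fun h0 => one_ne_zero (α := ℝ) (by simpa using congr_fun h0 z)

lemma PosDef.schurCompl_le_of_subset (hM : M.PosDef) (hST : S ⊆ T) (hz : z ∉ T) :
    schurCompl M T z ≤ schurCompl M S z := by
  obtain ⟨m, hm, h⟩ := hM.exists_quadOn_insert_update_eq (fun hzS => hz (hST hzS))
  obtain ⟨mT, -, hT⟩ := hM.exists_quadOn_insert_update_eq hz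
  calc schurCompl M T z ≤ quadOn M (insert z T) (update (-m) z 1) :=
        (hM.posSemidef.isLeast_of_quadOn_insert_update_eq hT).2 ⟨-m, rfl⟩
    _ = quadOn M (insert z S) (update (-m) z 1) :=
        (quadOn_of_subset (insert_subset_insert z hST) (support_update_neg_subset hm)).symm
    _ = schurCompl M S z := quadOn_insert_update_neg h

noncomputable def gaussDensity (M : Matrix α α ℝ) (S : Finset α) (φ : S → ℝ) : ℝ :=
  exp (-quadOn M S (updateFinset 0 S φ))

noncomputable def gaussZ (M : Matrix α α ℝ) (S : Finset α) : ℝ :=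
  ∫ φ, gaussDensity M S φ

lemma continuous_gaussDensity : Continuous (gaussDensity M S) := by
  have := continuous_updateFinset (0 : α → ℝ) S
  unfold gaussDensity quadOn
  fun_prop

lemma gaussZ_nonneg (S : Finset α) : 0 ≤ gaussZ M S :=
  integral_nonneg fun _ => (exp_pos _).le

lemma gaussZ_empty : gaussZ M ∅ = 1 := by
  simp [gaussZ, gaussDensity, quadOn, measureReal_def, volume_pi]

lemma gaussZ_zero_of_nonempty (hS : S.Nonempty) : gaussZ 0 S = 0 := by
  simp [gaussZ, gaussDensity, quadOn, measureReal_def, volume_pi, Measure.pi_univ, hS.ne_empty]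

theorem gaussZ_zero_mul_le (C D : Finset α) :
    gaussZ 0 C * gaussZ 0 D ≤ gaussZ 0 (C ∩ D) * gaussZ 0 (C ∪ D) := by
  rcases C.eq_empty_or_nonempty with rfl | hC
  · simp [mul_comm]
  · rw [gaussZ_zero_of_nonempty hC, zero_mul]
    exact mul_nonneg (gaussZ_nonneg _) (gaussZ_nonneg _)

lemma exists_measurePreserving_updateFinset_singleton_union {β : Type*} [MeasureSpace β]
    [SigmaFinite (volume : Measure β)] (x : α → β) (hz : z ∉ S) :
    ∃ e : β × (S → β) ≃ᵐ (↥({z} ∪ S) → β), MeasurePreserving e ∧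
      ∀ q, updateFinset x ({z} ∪ S) (e q) = update (updateFinset x S q.2) z q.1 := by
  refine ⟨((MeasurableEquiv.funUnique _ β).symm.prodCongr (.refl _)).trans
    (.piFinsetUnion (fun _ => β) (disjoint_singleton_left.2 hz)), ?_, fun q => ?_⟩
  · have h : MeasurePreserving (Prod.map (MeasurableEquiv.funUnique ({z} : Finset α) β).symm id)
        (volume : Measure (β × (S → β))) volume :=
      ((volume_preserving_funUnique _ β).symm _).prod (.id _)
    exact (volume_preserving_piFinsetUnion (fun _ : α => β) (disjoint_singleton_left.2 hz)).comp h
  · refine (updateFinset_updateFinset _).symm.trans ?_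
    rw [updateFinset_singleton]
    ext i
    rcases eq_or_ne i z with rfl | hiz
    · simp [updateFinset, hz]
    · simp [updateFinset, hiz]

lemma PosDef.exists_measurePreserving_gaussDensity_eq (hM : M.PosDef) (hz : z ∉ S) :
    ∃ Ψ : ℝ × (S → ℝ) → (↥({z} ∪ S) → ℝ), MeasurePreserving Ψ ∧
      ∀ q, gaussDensity M ({z} ∪ S) (Ψ q) =
        exp (-schurCompl M S z * q.1 ^ 2) * gaussDensity M S q.2 := by
  obtain ⟨e, he, he_apply⟩ := exists_measurePreserving_updateFinset_singleton_union (0 : α → ℝ) hz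
  obtain ⟨m, -, hm⟩ := hM.exists_quadOn_insert_update_eq hz
  set m' : S → ℝ := fun i => m i
  have shear : MeasurePreserving (fun q : ℝ × (S → ℝ) => (q.1, q.2 - q.1 • m')) volume volume :=
    (MeasurePreserving.id volume).skew_product (g := fun t φ => φ - t • m')
      (continuous_snd.sub (continuous_fst.smul continuous_const)).measurable
      (Filter.Eventually.of_forall fun t => map_sub_right_eq_self volume _)
  refine ⟨e ∘ _, he.comp shear, fun ⟨t, φ⟩ => ?_⟩
  have hS : ∀ i ∈ S, (updateFinset (0 : α → ℝ) S (φ - t • m') + t • m) i =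
      updateFinset (0 : α → ℝ) S φ i :=
    fun i hi => by simp [updateFinset, hi, m']
  simp only [gaussDensity, Function.comp_apply, he_apply]
  rw [← insert_eq, hm, quadOn_congr hS, neg_add, exp_add, mul_comm, neg_mul]

theorem PosDef.gaussZ_insert (hM : M.PosDef) (hz : z ∉ S) :
    gaussZ M (insert z S) = gaussZ M S * √(π / schurCompl M S z) := by
  obtain ⟨Ψ, hΨ, hΨ_apply⟩ := hM.exists_measurePreserving_gaussDensity_eq hz
  rw [gaussZ, insert_eq, ← hΨ.map_eq, integral_map hΨ.measurable.aemeasurable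
    continuous_gaussDensity.aestronglyMeasurable]
  simp_rw [hΨ_apply]
  rw [Measure.volume_eq_prod, integral_prod_mul (fun t => exp (-schurCompl M S z * t ^ 2)),
    integral_gaussian, mul_comm, gaussZ]

lemma PosDef.gaussZ_pos (hM : M.PosDef) (S : Finset α) : 0 < gaussZ M S := by
  induction S using Finset.induction_on with
  | empty => simp [gaussZ_empty]
  | insert z S hz ih =>
    rw [hM.gaussZ_insert hz]
    exact mul_pos ih (sqrt_pos.2 (div_pos pi_pos (hM.schurCompl_pos hz)))

lemma PosDef.gaussZ_insert_mul_le (hM : M.PosDef) (hST : S ⊆ T) (hz : z ∉ T) :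
    gaussZ M (insert z S) * gaussZ M T ≤ gaussZ M S * gaussZ M (insert z T) := by
  rw [hM.gaussZ_insert hz, hM.gaussZ_insert (fun hzS => hz (hST hzS)), mul_right_comm, mul_assoc]
  gcongr
  · exact (hM.gaussZ_pos S).le
  · exact (hM.gaussZ_pos T).le
  · exact hM.schurCompl_pos hz
  · exact hM.schurCompl_le_of_subset hST hz

theorem PosDef.gaussZ_mul_le (hM : M.PosDef) (C D : Finset α) :
    gaussZ M C * gaussZ M D ≤ gaussZ M (C ∩ D) * gaussZ M (C ∪ D) :=
  mul_le_inter_mul_union_of_insert hM.gaussZ_pos (fun _ _ _ => hM.gaussZ_insert_mul_le) C D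

end Matrix

open Matrix

section Lattice

variable {G : Type*} [AddCommGroup G]

lemma hasSum_mul_apply_sub {u p : G → ℝ} {a b : ℝ} (hu : HasSum u a) (hp : HasSum p b) :
    HasSum (fun q : G × G => u q.1 * p (q.1 - q.2)) (a * b) := by
  have hprod := hu.mul hp (summable_mul_of_summable_norm hu.summable.norm hp.summable.norm)
  rw [← (Equiv.prodShear (Equiv.refl G) Equiv.subLeft).hasSum_iff]
  simpa [Function.comp_def] using hprod

theorem Function.Periodic.eq_zero_of_finite_support {M : Type*} [Zero M] [IsAddTorsionFree G]
    {ψ : G → M} {v : G} (h : Periodic ψ v) (hv : v ≠ 0) (hfin : (support ψ).Finite) : ψ = 0 := by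
  funext x
  by_contra hx
  refine (Set.infinite_range_of_injective (f := fun n : ℤ => x + n • v) fun a b hab =>
    smul_left_injective ℤ hv (add_left_cancel hab)).mono ?_ hfin
  rintro _ ⟨n, rfl⟩
  simpa [(h.zsmul n) x] using hx

variable [DecidableEq G] {p : G → ℝ} {β : ℝ}

noncomputable def hamiltonianMatrix (p : G → ℝ) (β : ℝ) : Matrix G G ℝ :=
  (β / 2) • (1 - of fun x y => p (x - y))

lemma hasSum_dirichlet (hp : HasSum p 1) (hsymm : ∀ x, p (-x) = p x) {S : Finset G}
    {ψ : G → ℝ} (hψ : support ψ ⊆ S) :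
    HasSum (fun q : G × G => p (q.1 - q.2) * ((ψ q.1 - ψ q.2) ^ 2 / 2))
      (quadOn (1 - of fun x y => p (x - y)) S ψ) := by
  have hψ' : ∀ x ∉ S, ψ x = 0 := support_subset_iff'.1 hψ
  have hsq : HasSum (fun x => ψ x ^ 2 / 2) (∑ x ∈ S, ψ x ^ 2 / 2) :=
    hasSum_sum_of_ne_finset_zero fun x hx => by simp [hψ' x hx]
  have h1 := hasSum_mul_apply_sub hsq hp
  have h2 := (Equiv.prodComm G G).hasSum_iff.2 h1
  have h3 : HasSum (fun q : G × G => p (q.1 - q.2) * ψ q.1 * ψ q.2)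
      (∑ x ∈ S, ∑ y ∈ S, p (x - y) * ψ x * ψ y) := by
    rw [← sum_product']
    exact hasSum_sum_of_ne_finset_zero fun q hq => by
      rcases not_and_or.1 (mem_product.not.1 hq) with h | h <;> simp [hψ' _ h]
  have hfun : (fun q : G × G => p (q.1 - q.2) * ((ψ q.1 - ψ q.2) ^ 2 / 2)) = fun q =>
      ψ q.1 ^ 2 / 2 * p (q.1 - q.2) + ((fun q : G × G => ψ q.1 ^ 2 / 2 * p (q.1 - q.2)) ∘
        Equiv.prodComm G G) q - p (q.1 - q.2) * ψ q.1 * ψ q.2 := by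
    funext q
    simp only [Function.comp_apply, Equiv.prodComm_apply, Prod.fst_swap, Prod.snd_swap]
    rw [← hsymm, neg_sub]
    ring
  have hval : quadOn (1 - of fun x y => p (x - y)) S ψ =
      (∑ x ∈ S, ψ x ^ 2 / 2) * 1 + (∑ x ∈ S, ψ x ^ 2 / 2) * 1 -
        ∑ x ∈ S, ∑ y ∈ S, p (x - y) * ψ x * ψ y := by
    simp only [quadOn, Matrix.sub_apply, one_apply, of_apply, mul_sub, mul_ite, mul_one, mul_zero,
      sub_mul, ite_mul, zero_mul, sum_sub_distrib, sum_ite_eq, sum_ite_mem, inter_self]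
    rw [← sum_add_distrib]
    congr 1
    · exact sum_congr rfl fun x _ => by ring
    · exact sum_congr rfl fun x _ => sum_congr rfl fun y _ => by ring
  rw [hfun, hval]
  exact (h1.add h2).sub h3

lemma posDef_hamiltonianMatrix [IsAddTorsionFree G] (hβ : 0 < β) (hp_nonneg : ∀ x, 0 ≤ p x)
    (hsymm : ∀ x, p (-x) = p x) (hp : HasSum p 1) {v : G} (hv : v ≠ 0) (hpv : 0 < p v) :
    (hamiltonianMatrix p β).PosDef := by
  refine ⟨isHermitian_iff_isSymm.2 (IsSymm.ext fun x y => ?_), fun ψ hψ0 => ?_⟩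
  · simp [hamiltonianMatrix, one_apply, eq_comm, ← hsymm (x - y)]
  have hnonneg (q : G × G) : 0 ≤ p (q.1 - q.2) * ((ψ q.1 - ψ q.2) ^ 2 / 2) :=
    mul_nonneg (hp_nonneg _) (by positivity)
  have hE := hasSum_dirichlet hp hsymm (S := ψ.support) (ψ := ψ) (by simp)
  have hpos : 0 < quadOn (1 - of fun x y => p (x - y)) ψ.support ψ := by
    refine (hE.nonneg hnonneg).lt_of_ne fun h0 => hψ0 ?_
    have hzero := (hasSum_zero_iff_of_nonneg hnonneg).1 (h0 ▸ hE)
    have hper : Periodic ψ v := fun x => by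
      simpa [hpv.ne', sub_eq_zero] using congr_fun hzero (x + v, x)
    exact DFunLike.coe_injective
      (hper.eq_zero_of_finite_support hv (ψ.support.finite_toSet.subset (by simp)))
  rw [finsupp_sum_eq_quadOn, hamiltonianMatrix, quadOn_smul]
  exact mul_pos (half_pos hβ) hpos

lemma hamiltonianMatrix_eq_zero (hp : HasSum p 1) (hdeg : ∀ v ≠ 0, p v = 0) :
    hamiltonianMatrix p β = 0 := by
  have hp0 : p 0 = 1 := by
    rw [← hp.tsum_eq, tsum_eq_single 0 hdeg]
  ext x y
  by_cases hxy : x = y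
  · simp [hamiltonianMatrix, hxy, hp0]
  · simp [hamiltonianMatrix, hxy, hdeg (x - y) (sub_ne_zero.2 hxy)]

end Lattice

lemma gaussH_eq_quadOn {d : ℕ} {p : (Fin d → ℤ) → ℝ} (β : ℝ) (hp : HasSum p 1)
    (hsymm : ∀ x, p (-x) = p x) {D : Finset (Fin d → ℤ)} {ψ : (Fin d → ℤ) → ℝ}
    (hψ : support ψ ⊆ D) : gaussH p β D ψ = quadOn (hamiltonianMatrix p β) D ψ := by
  have hψ' : ∀ x ∉ D, ψ x = 0 := support_subset_iff'.1 hψ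
  rw [hamiltonianMatrix, quadOn_smul, ← (hasSum_dirichlet hp hsymm hψ).tsum_eq, gaussH]
  congr 1
  refine tsum_congr fun q => ?_
  split_ifs with h
  · rfl
  · obtain ⟨h1, h2⟩ := not_or.1 h
    simp [hψ' _ h1, hψ' _ h2]

lemma freeZ_eq_gaussZ {d : ℕ} {p : (Fin d → ℤ) → ℝ} (β : ℝ) (hp : HasSum p 1)
    (hsymm : ∀ x, p (-x) = p x) (D : Finset (Fin d → ℤ)) :
    freeZ p β D = gaussZ (hamiltonianMatrix p β) D := by
  refine integral_congr_ae (Filter.Eventually.of_forall fun φ => ?_)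
  rw [gaussDensity, ← gaussH_eq_quadOn β hp hsymm (support_updateFinset_zero_subset D φ)]
  rfl

theorem freeZ_mul_le {d : ℕ} {p : (Fin d → ℤ) → ℝ} {β : ℝ} (hβ : 0 < β)
    (hp_nonneg : ∀ x, 0 ≤ p x) (hsymm : ∀ x, p (-x) = p x) (hp_sum : ∑' x, p x = 1)
    (C D : Finset (Fin d → ℤ)) :
    freeZ p β C * freeZ p β D ≤ freeZ p β (C ∩ D) * freeZ p β (C ∪ D) := by
  have hp : HasSum p 1 := by
    refine hp_sum ▸ Summable.hasSum ?_
    by_contra h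
    simp [tsum_eq_zero_of_not_summable h] at hp_sum
  simp only [freeZ_eq_gaussZ β hp hsymm]
  by_cases hdeg : ∃ v ≠ 0, 0 < p v
  · obtain ⟨v, hv, hpv⟩ := hdeg
    exact (posDef_hamiltonianMatrix hβ hp_nonneg hsymm hp hv hpv).gaussZ_mul_le C D
  · rw [hamiltonianMatrix_eq_zero hp fun v hv =>
      le_antisymm (not_lt.1 fun hpv => hdeg ⟨v, hv, hpv⟩) (hp_nonneg v)]
    exact gaussZ_zero_mul_le C D

theorem nuPin_lattice_condition_general {d : ℕ} (p : (Fin d → ℤ) → ℝ) (β : ℝ) (hβ : 0 < β)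
    (hp_nonneg : ∀ x, 0 ≤ p x) (hp_symm : ∀ x, p (-x) = p x)
    (hp_sum : ∑' x, p x = 1)
    (Λ : Finset (Fin d → ℤ)) (ε : ℝ) (hε : 0 < ε)
    (A B : Finset (Fin d → ℤ)) :
    nuPin p β Λ ε A * nuPin p β Λ ε B
      ≤ nuPin p β Λ ε (A ∪ B) * nuPin p β Λ ε (A ∩ B) := by
  have hZ := freeZ_mul_le hβ hp_nonneg hp_symm hp_sum (Λ \ A) (Λ \ B)
  rw [← sdiff_union_distrib, ← sdiff_inter_distrib_right] at hZ
  simp only [nuPin, div_mul_div_comm]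
  refine div_le_div_of_nonneg_right ?_ (mul_self_nonneg _)
  calc ε ^ #A * freeZ p β (Λ \ A) * (ε ^ #B * freeZ p β (Λ \ B))
      = ε ^ (#A + #B) * (freeZ p β (Λ \ A) * freeZ p β (Λ \ B)) := by ring
    _ ≤ ε ^ (#A + #B) * (freeZ p β (Λ \ (A ∪ B)) * freeZ p β (Λ \ (A ∩ B))) := by gcongr
    _ = ε ^ #(A ∪ B) * freeZ p β (Λ \ (A ∪ B)) * (ε ^ #(A ∩ B) * freeZ p β (Λ \ (A ∩ B))) := by
      rw [← card_union_add_card_inter]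
      ring

/-- In the Gaussian δ-pinning case, the distribution of pinned sites
satisfies the lattice (strong FKG) condition
`ν_Λ^ε(A ∪ B) ν_Λ^ε(A ∩ B) ≥ ν_Λ^ε(A) ν_Λ^ε(B)`. -/
theorem nuPin_lattice_condition {d : ℕ} (p : (Fin d → ℤ) → ℝ) (β : ℝ) (hβ : 0 < β)
    (hp_nonneg : ∀ x, 0 ≤ p x) (hp_symm : ∀ x, p (-x) = p x)
    (hp_sum : ∑' x, p x = 1)
    (Λ : Finset (Fin d → ℤ)) (ε : ℝ) (hε : 0 < ε)
    (A B : Finset (Fin d → ℤ)) (hA : A ⊆ Λ) (hB : B ⊆ Λ) :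
    nuPin p β Λ ε A * nuPin p β Λ ε B
      ≤ nuPin p β Λ ε (A ∪ B) * nuPin p β Λ ε (A ∩ B) :=
  nuPin_lattice_condition_general p β hβ hp_nonneg hp_symm hp_sum Λ ε hε A B
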